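/- arXiv:2004.12732 — 5 statements merged into one kernel-verified Lean document; each statement's English description precedes it below -/
import Mathlib

section
/- Let α > 0 and ς ∈ {+1, −1}. There exist ε₀ ∈ (0, 1) and K > 0, depending only on α, such that for every ε ∈ (0, ε₀], setting c = 1/(−1 + ςε³) and letting A be the 4×4 block-diagonal matrix with blocks [[0, c/α], [−cα, 0]] and [[0, cε³], [−cε³, 0]], the matrix I₄ − exp(2πA) is invertible and its inverse has operator norm at most K/ε³ (with respect to the Euclidean norm on ℝ⁴). -/
open Real

noncomputable section

/-- The operator norm of a 4×4 real matrix with respect to the Euclidean norm on ℝ⁴. -/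
def euclOpNorm (M : Matrix (Fin 4) (Fin 4) ℝ) : ℝ :=
  ‖LinearMap.toContinuousLinearMap (Matrix.toEuclideanLin M)‖

namespace InverseBoundAux

open NormedSpace

theorem exp_smul_of_sq_eq_neg_one {n : Type*} [Fintype n] [DecidableEq n]
    (J : Matrix n n ℝ) (hJ : J * J = -1) (t : ℝ) :
    exp (t • J) = Real.cos t • (1 : Matrix n n ℝ) + Real.sin t • J := by
  letI : NormedRing (Matrix n n ℝ) := Matrix.linftyOpNormedRing
  letI : NormedAlgebra ℝ (Matrix n n ℝ) := Matrix.linftyOpNormedAlgebra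
  letI : NormedAlgebra ℚ (Matrix n n ℝ) := Matrix.linftyOpNormedAlgebra
  set φ := Complex.liftAux J hJ with hφ
  have hcont : Continuous φ := φ.toLinearMap.continuous_of_finiteDimensional
  have h1 : φ (t • Complex.I) = t • J := by
    simp [hφ, Complex.liftAux_apply, Algebra.algebraMap_eq_smul_one]
  have h2 : exp ((t : ℂ) * Complex.I) = Complex.exp ((t : ℂ) * Complex.I) := by
    rw [Complex.exp_eq_exp_ℂ]
  calc exp (t • J) = φ (exp (t • Complex.I)) := by rw [map_exp φ hcont, h1]; rfl
    _ = φ (Complex.exp ((t : ℂ) * Complex.I)) := by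
        rw [← h2]; norm_num [Complex.real_smul]
    _ = Real.cos t • (1 : Matrix n n ℝ) + Real.sin t • J := by
        rw [Complex.exp_mul_I]
        simp [hφ, Complex.liftAux_apply, Algebra.algebraMap_eq_smul_one,
          Complex.cos_ofReal_re, Complex.sin_ofReal_re]

theorem exp_reindex' {m n : Type*} [Fintype m] [DecidableEq m] [Fintype n] [DecidableEq n]
    (e : m ≃ n) (M : Matrix m m ℝ) :
    exp (Matrix.reindex e e M) = Matrix.reindex e e (exp M) := by
  letI : NormedRing (Matrix m m ℝ) := Matrix.linftyOpNormedRing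
  letI : NormedAlgebra ℝ (Matrix m m ℝ) := Matrix.linftyOpNormedAlgebra
  letI : NormedRing (Matrix n n ℝ) := Matrix.linftyOpNormedRing
  letI : NormedAlgebra ℝ (Matrix n n ℝ) := Matrix.linftyOpNormedAlgebra
  letI : NormedAlgebra ℚ (Matrix m m ℝ) := Matrix.linftyOpNormedAlgebra
  letI : NormedAlgebra ℚ (Matrix n n ℝ) := Matrix.linftyOpNormedAlgebra
  have hcont : Continuous (Matrix.reindexAlgEquiv ℝ ℝ e) :=
    (Matrix.reindexAlgEquiv ℝ ℝ e).toLinearMap.continuous_of_finiteDimensional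
  have := map_exp (Matrix.reindexAlgEquiv ℝ ℝ e : Matrix m m ℝ →+* Matrix n n ℝ) hcont M
  simp at this; exact this.symm

def e4 : Fin 2 × Fin 2 ≃ Fin 4 :=
  ⟨fun p => ⟨2 * p.2.val + p.1.val, by omega⟩,
   fun i => (⟨i.val % 2, by omega⟩, ⟨i.val / 2, by omega⟩),
   by decide, by decide⟩

theorem exp_pair (X Y : Matrix (Fin 2) (Fin 2) ℝ) :
    exp (![X, Y]) = ![exp X, exp Y] := by
  letI : NormedRing (Matrix (Fin 2) (Fin 2) ℝ) := Matrix.linftyOpNormedRing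
  letI : NormedAlgebra ℝ (Matrix (Fin 2) (Fin 2) ℝ) := Matrix.linftyOpNormedAlgebra
  letI : NormedAlgebra ℚ (Matrix (Fin 2) (Fin 2) ℝ) := Matrix.linftyOpNormedAlgebra
  funext k
  erw [Pi.coe_exp]
  fin_cases k <;> simp <;> rfl

theorem exp_blocks (X Y : Matrix (Fin 2) (Fin 2) ℝ) :
    exp (Matrix.reindex e4 e4 (Matrix.blockDiagonal ![X, Y])) =
      Matrix.reindex e4 e4 (Matrix.blockDiagonal ![exp X, exp Y]) := by
  rw [exp_reindex', Matrix.exp_blockDiagonal, exp_pair]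

theorem eucl_norm_le_sum_abs (v : EuclideanSpace ℝ (Fin 4)) : ‖v‖ ≤ ∑ i, |v i| := by
  rw [EuclideanSpace.norm_eq]
  have h : ∑ i, ‖v i‖ ^ 2 ≤ (∑ i, ‖v i‖) ^ 2 :=
    Finset.sum_sq_le_sq_sum_of_nonneg (fun i _ => norm_nonneg _)
  calc √(∑ i, ‖v i‖ ^ 2) ≤ √((∑ i, ‖v i‖) ^ 2) := Real.sqrt_le_sqrt h
    _ = ∑ i, ‖v i‖ := Real.sqrt_sq (by positivity)
    _ = ∑ i, |v i| := by simp [Real.norm_eq_abs]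

theorem coord_le_norm (x : EuclideanSpace ℝ (Fin 4)) (j : Fin 4) : |x j| ≤ ‖x‖ := by
  rw [EuclideanSpace.norm_eq, ← Real.sqrt_sq_eq_abs]
  apply Real.sqrt_le_sqrt
  have : |x j| ^ 2 ≤ ∑ i, ‖x i‖ ^ 2 :=
    Finset.single_le_sum (f := fun i => ‖x i‖ ^ 2) (fun i _ => by positivity) (Finset.mem_univ j)
  simpa [sq_abs, Real.norm_eq_abs] using this

theorem euclOpNorm_le_sum_abs (M : Matrix (Fin 4) (Fin 4) ℝ) :
    euclOpNorm M ≤ ∑ i, ∑ j, |M i j| := by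
  apply ContinuousLinearMap.opNorm_le_bound _ (by positivity)
  intro x
  calc ‖(LinearMap.toContinuousLinearMap (Matrix.toEuclideanLin M)) x‖
      ≤ ∑ i, |(Matrix.toEuclideanLin M x) i| := eucl_norm_le_sum_abs _
    _ ≤ ∑ i, ∑ j, |M i j| * ‖x‖ := by
        apply Finset.sum_le_sum
        intro i _
        have h : (Matrix.toEuclideanLin M x) i = ∑ j, M i j * x j := by
          simp [Matrix.toEuclideanLin_apply, Matrix.mulVec, dotProduct]
        rw [h]
        calc |∑ j, M i j * x j| ≤ ∑ j, |M i j * x j| := Finset.abs_sum_le_sum_abs _ _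
          _ ≤ ∑ j, |M i j| * ‖x‖ := by
              apply Finset.sum_le_sum
              intro j _
              rw [abs_mul]
              exact mul_le_mul_of_nonneg_left (coord_le_norm x j) (abs_nonneg _)
    _ = (∑ i, ∑ j, |M i j|) * ‖x‖ := by
        rw [Finset.sum_mul]; congr 1; ext i; rw [Finset.sum_mul]

theorem inv2 (a ct st : ℝ) (ha : a ≠ 0) (hs : st ^ 2 = (1 - ct) * (1 + ct))
    (hd : 1 - ct ≠ 0) :
    (1 - (ct • (1 : Matrix (Fin 2) (Fin 2) ℝ) + st • !![0, 1/a; -a, 0])) *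
        !![1/2, st / (a * (2 * (1 - ct))); -(a * st) / (2 * (1 - ct)), 1/2] = 1 ∧
    !![1/2, st / (a * (2 * (1 - ct))); -(a * st) / (2 * (1 - ct)), 1/2] *
        (1 - (ct • (1 : Matrix (Fin 2) (Fin 2) ℝ) + st • !![0, 1/a; -a, 0])) = 1 := by
  constructor <;>
  · ext i j
    fin_cases i <;> fin_cases j <;>
      simp [Matrix.mul_apply, Fin.sum_univ_two, Matrix.one_apply] <;>
      field_simp <;> ring_nf <;>
      first
        | linear_combination hs
        | linear_combination (2*a - 1) * hs
        | linear_combination (2*a) * hs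

theorem absbound {s co e3 : ℝ} (he : 0 < e3) (hs : e3 ≤ |s|) (hco : |co| ≤ 1) :
    |2*s*co / (2*(2*s^2))| ≤ 1/(2*e3) := by
  have hs0 : s ≠ 0 := by
    intro h; rw [h] at hs; simp at hs; linarith
  rw [abs_div]
  rw [div_le_div_iff₀ (by positivity) (by positivity)]
  have h1 : |2*s*co| ≤ 2 * |s| := by
    rw [abs_mul, abs_mul]
    calc |2| * |s| * |co| ≤ |2| * |s| * 1 :=
          mul_le_mul_of_nonneg_left hco (by positivity)
      _ = 2 * |s| := by simp [abs_of_nonneg]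
  have h2 : |2*(2*s^2)| = 4 * s^2 := by
    rw [abs_of_pos (by positivity)]; ring
  rw [h2]
  nlinarith [sq_abs s, abs_nonneg s]

end InverseBoundAux

open InverseBoundAux

set_option maxHeartbeats 1000000 in
/-- For `A` the block-diagonal matrix with blocks `[[0, c/α], [−cα, 0]]` and
`[[0, cε³], [−cε³, 0]]`, `c = 1/(−1+ςε³)`, the matrix `I₄ − exp(2πA)` is invertible
with inverse of (Euclidean) operator norm at most `K/ε³`. -/
theorem inverse_bound (α : ℝ) (hα : 0 < α) (ς : ℝ) (hς : ς = 1 ∨ ς = -1) :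
    ∃ ε₀ ∈ Set.Ioo (0 : ℝ) 1, ∃ K > (0 : ℝ),
      ∀ ε ∈ Set.Ioc (0 : ℝ) ε₀,
        let c : ℝ := 1 / (-1 + ς * ε ^ 3)
        let A : Matrix (Fin 4) (Fin 4) ℝ :=
          !![0, c / α, 0, 0;
             -c * α, 0, 0, 0;
             0, 0, 0, c * ε ^ 3;
             0, 0, -c * ε ^ 3, 0]
        ∃ B : Matrix (Fin 4) (Fin 4) ℝ,
          (1 - NormedSpace.exp ((2 * π) • A)) * B = 1 ∧
          B * (1 - NormedSpace.exp ((2 * π) • A)) = 1 ∧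
          euclOpNorm B ≤ K / ε ^ 3 := by
  refine ⟨1/2, by norm_num, 4 + α + 1/α, by positivity, ?_⟩
  intro ε hε
  intro c A
  obtain ⟨hε0, hε2⟩ := hε
  have hε3 : 0 < ε ^ 3 := by positivity
  have hε8 : ε ^ 3 ≤ 1/8 := by
    have h := pow_le_pow_left₀ hε0.le hε2 3
    norm_num at h
    linarith
  have hα' : α ≠ 0 := ne_of_gt hα
  -- bounds on c
  have hq : |ς * ε ^ 3| = ε ^ 3 := by
    rcases hς with h | h <;> rw [h] <;> simp [abs_of_pos hε3]
  have hqle := abs_le.mp (hq.le.trans hε8)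
  have hD7 : -1 + ς * ε ^ 3 ≤ -7/8 := by linarith [hqle.2]
  have hD9 : -9/8 ≤ -1 + ς * ε ^ 3 := by linarith [hqle.1]
  have hDne : -1 + ς * ε ^ 3 ≠ 0 := by intro h; rw [h] at hD7; norm_num at hD7
  have hcD : c * (-1 + ς * ε ^ 3) = 1 := by
    show (1 / (-1 + ς * ε ^ 3)) * (-1 + ς * ε ^ 3) = 1
    field_simp
  have hcneg : c < 0 := by
    show 1 / (-1 + ς * ε ^ 3) < 0
    apply div_neg_of_pos_of_neg one_pos
    linarith
  have hchi : c ≤ -8/9 := by nlinarith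
  have hclo : -8/7 ≤ c := by nlinarith
  -- r and the sine bounds
  set r : ℝ := c * ε ^ 3 with hrdef
  have hrneg : r < 0 := mul_neg_of_neg_of_pos hcneg hε3
  have hrlo : ε ^ 3 * (8/9) ≤ -r := by
    rw [hrdef]; nlinarith
  have hrhi : -r ≤ ε ^ 3 * (8/7) := by
    rw [hrdef]; nlinarith
  have hx1 : 0 < π * (-r) := mul_pos pi_pos (by linarith)
  have hx2 : π * (-r) ≤ π / 2 := by nlinarith [pi_pos]
  have hsin' : 2 * (-r) ≤ Real.sin (π * (-r)) := by
    have := Real.mul_le_sin (le_of_lt hx1) hx2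
    calc 2 * (-r) = 2 / π * (π * (-r)) := by field_simp
      _ ≤ Real.sin (π * (-r)) := this
  have hsinr : ε ^ 3 ≤ |Real.sin (π * r)| := by
    have h1 : Real.sin (π * r) = -Real.sin (π * (-r)) := by
      rw [show π * r = -(π * (-r)) by ring, Real.sin_neg]
    rw [h1, abs_neg, abs_of_nonneg (by linarith)]
    linarith
  have hc1r : c + 1 = ς * r := by
    rcases hς with h | h <;> rw [h] at hcD ⊢ <;> rw [hrdef] <;> nlinarith
  have hsinc : ε ^ 3 ≤ |Real.sin (π * c)| := by
    have h1 : Real.sin (π * (c + 1)) = -Real.sin (π * c) := by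
      rw [show π * (c + 1) = π * c + π by ring]
      exact Real.sin_antiperiodic (π * c)
    have h2 : |Real.sin (π * (c + 1))| = |Real.sin (π * r)| := by
      rw [hc1r]
      rcases hς with h | h <;> rw [h] <;> simp [Real.sin_neg]
    rw [← abs_neg, ← h1, h2]
    exact hsinr
  have hs1ne : Real.sin (π * c) ≠ 0 := by
    intro h; rw [h] at hsinc; simp at hsinc; linarith
  have hs2ne : Real.sin (π * r) ≠ 0 := by
    intro h; rw [h] at hsinr; simp at hsinr; linarith
  -- double angle setup
  set t : ℝ := 2 * (π * c) with htdef
  set u : ℝ := 2 * (π * r) with hudef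
  have pyth_c := Real.sin_sq_add_cos_sq (π * c)
  have pyth_r := Real.sin_sq_add_cos_sq (π * r)
  have h1mct : 1 - Real.cos t = 2 * Real.sin (π * c) ^ 2 := by
    rw [htdef, Real.cos_two_mul]; nlinarith
  have h1mcu : 1 - Real.cos u = 2 * Real.sin (π * r) ^ 2 := by
    rw [hudef, Real.cos_two_mul]; nlinarith
  have hdt : 1 - Real.cos t ≠ 0 := by
    rw [h1mct]; exact mul_ne_zero two_ne_zero (pow_ne_zero 2 hs1ne)
  have hdu : 1 - Real.cos u ≠ 0 := by
    rw [h1mcu]; exact mul_ne_zero two_ne_zero (pow_ne_zero 2 hs2ne)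
  have hst2 : Real.sin t ^ 2 = (1 - Real.cos t) * (1 + Real.cos t) := by
    nlinarith [Real.sin_sq_add_cos_sq t]
  have hsu2 : Real.sin u ^ 2 = (1 - Real.cos u) * (1 + Real.cos u) := by
    nlinarith [Real.sin_sq_add_cos_sq u]
  -- J matrices
  have hJ1 : (!![0, 1/α; -α, 0] : Matrix (Fin 2) (Fin 2) ℝ) * !![0, 1/α; -α, 0] = -1 := by
    ext i j
    fin_cases i <;> fin_cases j <;>
      simp [Matrix.mul_apply, Fin.sum_univ_two, Matrix.one_apply] <;> field_simp
  have hJ2 : (!![0, 1/(1:ℝ); -(1:ℝ), 0] : Matrix (Fin 2) (Fin 2) ℝ) *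
      !![0, 1/(1:ℝ); -(1:ℝ), 0] = -1 := by
    ext i j
    fin_cases i <;> fin_cases j <;>
      simp [Matrix.mul_apply, Fin.sum_univ_two, Matrix.one_apply]
  -- decomposition of (2π) • A
  have hA : (2 * π) • A = Matrix.reindex e4 e4 (Matrix.blockDiagonal
      ![t • !![0, 1/α; -α, 0], u • !![0, 1/(1:ℝ); -(1:ℝ), 0]]) := by
    ext i j
    fin_cases i <;> fin_cases j <;>
      norm_num [Matrix.reindex_apply, Matrix.submatrix_apply, e4,
        Matrix.blockDiagonal_apply, A, Matrix.smul_apply, Fin.ext_iff] <;>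
      (try field_simp) <;> (try ring)
  -- exponential
  set R₁ : Matrix (Fin 2) (Fin 2) ℝ :=
    Real.cos t • (1 : Matrix (Fin 2) (Fin 2) ℝ) + Real.sin t • !![0, 1/α; -α, 0] with hR₁
  set R₂ : Matrix (Fin 2) (Fin 2) ℝ :=
    Real.cos u • (1 : Matrix (Fin 2) (Fin 2) ℝ) +
      Real.sin u • !![0, 1/(1:ℝ); -(1:ℝ), 0] with hR₂
  have hexpA : NormedSpace.exp ((2 * π) • A) =
      Matrix.reindex e4 e4 (Matrix.blockDiagonal ![R₁, R₂]) := by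
    rw [hA, exp_blocks, exp_smul_of_sq_eq_neg_one _ hJ1, exp_smul_of_sq_eq_neg_one _ hJ2]
  -- inverse blocks
  set B₁ : Matrix (Fin 2) (Fin 2) ℝ :=
    !![1/2, Real.sin t / (α * (2 * (1 - Real.cos t)));
       -(α * Real.sin t) / (2 * (1 - Real.cos t)), 1/2] with hB₁
  set B₂ : Matrix (Fin 2) (Fin 2) ℝ :=
    !![1/2, Real.sin u / (1 * (2 * (1 - Real.cos u)));
       -(1 * Real.sin u) / (2 * (1 - Real.cos u)), 1/2] with hB₂
  obtain ⟨hFB1, hBF1⟩ := inv2 α (Real.cos t) (Real.sin t) hα' hst2 hdt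
  obtain ⟨hFB2, hBF2⟩ := inv2 1 (Real.cos u) (Real.sin u) one_ne_zero hsu2 hdu
  set B : Matrix (Fin 4) (Fin 4) ℝ :=
    Matrix.reindex e4 e4 (Matrix.blockDiagonal ![B₁, B₂]) with hBdef
  -- algebra facts
  have hmul : ∀ X Y : Fin 2 → Matrix (Fin 2) (Fin 2) ℝ,
      Matrix.reindex e4 e4 (Matrix.blockDiagonal X) *
        Matrix.reindex e4 e4 (Matrix.blockDiagonal Y) =
      Matrix.reindex e4 e4 (Matrix.blockDiagonal fun k => X k * Y k) := by
    intro X Y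
    simp [Matrix.reindex_apply, Matrix.submatrix_mul_equiv, Matrix.blockDiagonal_mul]
  have hone : (1 : Matrix (Fin 4) (Fin 4) ℝ) =
      Matrix.reindex e4 e4 (Matrix.blockDiagonal ![1, 1]) := by
    rw [show (![1, 1] : Fin 2 → Matrix (Fin 2) (Fin 2) ℝ) = 1 by
        funext k; fin_cases k <;> rfl]
    rw [Matrix.blockDiagonal_one]
    simp [Matrix.reindex_apply, Matrix.submatrix_one_equiv]
  have hsub : (1 : Matrix (Fin 4) (Fin 4) ℝ) - NormedSpace.exp ((2 * π) • A) =
      Matrix.reindex e4 e4 (Matrix.blockDiagonal ![1 - R₁, 1 - R₂]) := by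
    rw [hexpA, hone]
    rw [show (Matrix.reindex e4 e4 (Matrix.blockDiagonal ![1, 1]) : Matrix (Fin 4) (Fin 4) ℝ) -
        Matrix.reindex e4 e4 (Matrix.blockDiagonal ![R₁, R₂]) =
        Matrix.reindex e4 e4 (Matrix.blockDiagonal ![1, 1] -
          Matrix.blockDiagonal ![R₁, R₂]) by ext i j; simp]
    rw [← Matrix.blockDiagonal_sub]
    congr 1
    congr 1
    funext k; fin_cases k <;> simp
  have hprodF : (fun k : Fin 2 => (![1 - R₁, 1 - R₂]) k * (![B₁, B₂]) k) = ![1, 1] := by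
    funext k
    fin_cases k
    · simp only [Matrix.cons_val_zero]
      exact hFB1
    · simp only [Matrix.cons_val_one, Matrix.head_cons]
      exact hFB2
  have hprodB : (fun k : Fin 2 => (![B₁, B₂]) k * (![1 - R₁, 1 - R₂]) k) = ![1, 1] := by
    funext k
    fin_cases k
    · simp only [Matrix.cons_val_zero]
      exact hBF1
    · simp only [Matrix.cons_val_one, Matrix.head_cons]
      exact hBF2
  refine ⟨B, ?_, ?_, ?_⟩
  · rw [hsub, hBdef, hmul, hprodF]
    exact hone.symm
  · rw [hsub, hBdef, hmul, hprodB]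
    exact hone.symm
  · -- norm bound
    have hb1 : |Real.sin t / (2 * (1 - Real.cos t))| ≤ 1 / (2 * ε ^ 3) := by
      have h1 : Real.sin t = 2 * Real.sin (π * c) * Real.cos (π * c) := by
        rw [htdef, Real.sin_two_mul]
      have h2 : 2 * (1 - Real.cos t) = 2 * (2 * Real.sin (π * c) ^ 2) := by
        rw [h1mct]
      rw [h1, h2]
      exact absbound hε3 hsinc (Real.abs_cos_le_one _)
    have hb2 : |Real.sin u / (2 * (1 - Real.cos u))| ≤ 1 / (2 * ε ^ 3) := by
      have h1 : Real.sin u = 2 * Real.sin (π * r) * Real.cos (π * r) := by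
        rw [hudef, Real.sin_two_mul]
      have h2 : 2 * (1 - Real.cos u) = 2 * (2 * Real.sin (π * r) ^ 2) := by
        rw [h1mcu]
      rw [h1, h2]
      exact absbound hε3 hsinr (Real.abs_cos_le_one _)
    set x1 : ℝ := Real.sin t / (α * (2 * (1 - Real.cos t))) with hx1d
    set x2 : ℝ := -(α * Real.sin t) / (2 * (1 - Real.cos t)) with hx2d
    set x3 : ℝ := Real.sin u / (1 * (2 * (1 - Real.cos u))) with hx3d
    set x4 : ℝ := -(1 * Real.sin u) / (2 * (1 - Real.cos u)) with hx4d
    set Bex : Matrix (Fin 4) (Fin 4) ℝ :=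
      !![1/2, x1, 0, 0; x2, 1/2, 0, 0; 0, 0, 1/2, x3; 0, 0, x4, 1/2] with hBexd
    have hBex : B = Bex := by
      ext i j
      fin_cases i <;> fin_cases j <;>
        norm_num [hBdef, hBexd, Matrix.reindex_apply, Matrix.submatrix_apply, e4,
          Matrix.blockDiagonal_apply, hB₁, hB₂, Fin.ext_iff, hx1d, hx2d, hx3d, hx4d]
    have habs1 : |x1| ≤ (1/α) * (1 / (2 * ε ^ 3)) := by
      rw [hx1d, show Real.sin t / (α * (2 * (1 - Real.cos t))) =
        (1/α) * (Real.sin t / (2 * (1 - Real.cos t))) by field_simp]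
      rw [abs_mul, abs_of_pos (by positivity : (0:ℝ) < 1/α)]
      exact mul_le_mul_of_nonneg_left hb1 (by positivity)
    have habs2 : |x2| ≤ α * (1 / (2 * ε ^ 3)) := by
      rw [hx2d, show -(α * Real.sin t) / (2 * (1 - Real.cos t)) =
        α * (-(Real.sin t / (2 * (1 - Real.cos t)))) by ring]
      rw [abs_mul, abs_of_pos hα, abs_neg]
      exact mul_le_mul_of_nonneg_left hb1 (by positivity)
    have habs3 : |x3| ≤ 1 / (2 * ε ^ 3) := by
      rw [hx3d, one_mul]
      exact hb2
    have habs4 : |x4| ≤ 1 / (2 * ε ^ 3) := by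
      rw [hx4d, show -(1 * Real.sin u) / (2 * (1 - Real.cos u)) =
        -(Real.sin u / (2 * (1 - Real.cos u))) by ring, abs_neg]
      exact hb2
    calc euclOpNorm B ≤ ∑ i, ∑ j, |Bex i j| := by
          rw [hBex]; exact euclOpNorm_le_sum_abs Bex
      _ = 2 + |x1| + |x2| + |x3| + |x4| := by
          rw [hBexd]
          simp [Fin.sum_univ_succ, abs_of_nonneg]
          ring
      _ ≤ 2 + (1/α) * (1 / (2 * ε ^ 3)) + α * (1 / (2 * ε ^ 3))
          + (1 / (2 * ε ^ 3)) + (1 / (2 * ε ^ 3)) := by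
          linarith [habs1, habs2, habs3, habs4]
      _ ≤ (4 + α + 1/α) / ε ^ 3 := by
          have h1α : 0 < 1/α := by positivity
          rw [le_div_iff₀ hε3]
          have expand : (2 + (1/α) * (1 / (2 * ε ^ 3)) + α * (1 / (2 * ε ^ 3))
              + (1 / (2 * ε ^ 3)) + (1 / (2 * ε ^ 3))) * ε ^ 3
              = 2 * ε ^ 3 + (1/α) * (1/2) + α * (1/2) + 1/2 + 1/2 := by
            field_simp
          rw [expand]
          linarith [hε8]
  done
end
end

section
/- For every (r, θ, R, Θ, Q₂, P₂) ∈ ℝ⁴ × ℝ² × ℝ², the map Φ(r, θ, R, Θ, Q₂, P₂) = (r, θ, R, Ω, q₂, p₂), where Ω = Θ + Q₂×P₂, q₂ = Rot(−θ)Q₂, p₂ = Rot(−θ)P₂ and Rot(−θ) = [[cos θ, sin θ], [−sin θ, cos θ]], is symplectic: its Fréchet derivative DΦ at every point satisfies ω(DΦ u, DΦ v) = ω(u, v) for all tangent vectors u, v, where ω is the canonical symplectic form pairing (r, R), (θ, Θ) (respectively (θ, Ω)) and the components of (Q₂, P₂) (respectively (q₂, p₂)); equivalently, the pullback under Φ of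 dr∧dR + dθ∧dΩ + dq₂∧dp₂ is dr∧dR + dθ∧dΘ + dQ₂∧dP₂. -/
open Real RealInnerProductSpace

noncomputable section

/-- The plane `ℝ²` with the Euclidean inner product. -/
abbrev V2 : Type := EuclideanSpace ℝ (Fin 2)

def vec2 (a b : ℝ) : V2 := WithLp.toLp 2 ![a, b]

/-- Planar cross product `a×b = a₁b₂ − a₂b₁`. -/
def cross (a b : V2) : ℝ := a 0 * b 1 - a 1 * b 0

/-- The phase space with coordinates `(r, θ, R, Θ, Q₂, P₂)`. -/
abbrev Phase : Type := ℝ × ℝ × ℝ × ℝ × V2 × V2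

/-- The rotation `Rot(−θ) = [[cos θ, sin θ], [−sin θ, cos θ]]` applied to a vector. -/
def rotNeg (θ : ℝ) (v : V2) : V2 :=
  vec2 (Real.cos θ * v 0 + Real.sin θ * v 1) (-Real.sin θ * v 0 + Real.cos θ * v 1)

/-- Hadjidemetriou's rotating change of coordinates
`Φ(r, θ, R, Θ, Q₂, P₂) = (r, θ, R, Θ + Q₂×P₂, Rot(−θ)Q₂, Rot(−θ)P₂)`. -/
def PhiHad : Phase → Phase :=
  fun z => (z.1, z.2.1, z.2.2.1, z.2.2.2.1 + cross z.2.2.2.2.1 z.2.2.2.2.2,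
    rotNeg z.2.1 z.2.2.2.2.1, rotNeg z.2.1 z.2.2.2.2.2)

/-- The canonical symplectic bilinear form on the phase space, pairing `(r, R)`,
`(θ, Θ)` and `(Q₂, P₂)`. -/
def symForm (u v : Phase) : ℝ :=
  u.1 * v.2.2.1 - u.2.2.1 * v.1 + u.2.1 * v.2.2.2.1 - u.2.2.2.1 * v.2.1
    + ⟪u.2.2.2.2.1, v.2.2.2.2.2⟫ - ⟪u.2.2.2.2.2, v.2.2.2.2.1⟫

-- Auxiliary lemmas -----------------------------------------------------------

lemma vec2_add (a b c d : ℝ) : vec2 a b + vec2 c d = vec2 (a + c) (b + d) := by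
  ext i; fin_cases i <;> simp [vec2]

lemma vec2_smul (t a b : ℝ) : t • vec2 a b = vec2 (t * a) (t * b) := by
  ext i; fin_cases i <;> simp [vec2]

lemma inner_V2 (a b : V2) : ⟪a, b⟫ = a 0 * b 0 + a 1 * b 1 := by
  simp [PiLp.inner_apply, RCLike.inner_apply, Fin.sum_univ_two]; ring

/-- The candidate derivative of `PhiHad` at `z`, as a linear map. -/
def Dlin (z : Phase) : Phase →ₗ[ℝ] Phase where
  toFun u := (u.1, u.2.1, u.2.2.1,
    u.2.2.2.1 + cross u.2.2.2.2.1 z.2.2.2.2.2 + cross z.2.2.2.2.1 u.2.2.2.2.2,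
    vec2 (Real.cos z.2.1 * u.2.2.2.2.1 0 + Real.sin z.2.1 * u.2.2.2.2.1 1
            + u.2.1 * (-Real.sin z.2.1 * z.2.2.2.2.1 0 + Real.cos z.2.1 * z.2.2.2.2.1 1))
         (-Real.sin z.2.1 * u.2.2.2.2.1 0 + Real.cos z.2.1 * u.2.2.2.2.1 1
            + u.2.1 * (-Real.cos z.2.1 * z.2.2.2.2.1 0 - Real.sin z.2.1 * z.2.2.2.2.1 1)),
    vec2 (Real.cos z.2.1 * u.2.2.2.2.2 0 + Real.sin z.2.1 * u.2.2.2.2.2 1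
            + u.2.1 * (-Real.sin z.2.1 * z.2.2.2.2.2 0 + Real.cos z.2.1 * z.2.2.2.2.2 1))
         (-Real.sin z.2.1 * u.2.2.2.2.2 0 + Real.cos z.2.1 * u.2.2.2.2.2 1
            + u.2.1 * (-Real.cos z.2.1 * z.2.2.2.2.2 0 - Real.sin z.2.1 * z.2.2.2.2.2 1)))
  map_add' u v := by
    simp only [Prod.fst_add, Prod.snd_add, Prod.mk_add_mk, cross, PiLp.add_apply, vec2_add]
    refine Prod.ext rfl (Prod.ext rfl (Prod.ext rfl (Prod.ext ?_ (Prod.ext ?_ ?_))))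
    · ring
    · simp only [vec2_add]; ring_nf
    · simp only [vec2_add]; ring_nf
  map_smul' t u := by
    simp only [Prod.smul_fst, Prod.smul_snd, Prod.smul_mk, smul_eq_mul, RingHom.id_apply, cross,
      PiLp.smul_apply]
    refine Prod.ext rfl (Prod.ext rfl (Prod.ext rfl (Prod.ext ?_ (Prod.ext ?_ ?_))))
    · simp only [smul_eq_mul]; ring
    · simp only [vec2_smul, smul_eq_mul]; ring_nf
    · simp only [vec2_smul, smul_eq_mul]; ring_nf

lemma hasFDerivAt_phiHad (z : Phase) :
    HasFDerivAt PhiHad (LinearMap.toContinuousLinearMap (Dlin z)) z := by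
  -- coordinate projections as continuous linear maps
  set pθ : Phase →L[ℝ] ℝ :=
    (ContinuousLinearMap.fst ℝ ℝ (ℝ × ℝ × V2 × V2)).comp
      (ContinuousLinearMap.snd ℝ ℝ (ℝ × ℝ × ℝ × V2 × V2)) with hpθdef
  set pR : Phase →L[ℝ] ℝ :=
    ((ContinuousLinearMap.fst ℝ ℝ (ℝ × V2 × V2)).comp
      ((ContinuousLinearMap.snd ℝ ℝ (ℝ × ℝ × V2 × V2)).comp
        (ContinuousLinearMap.snd ℝ ℝ (ℝ × ℝ × ℝ × V2 × V2)))) with hpRdef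
  set pΘ : Phase →L[ℝ] ℝ :=
    ((ContinuousLinearMap.fst ℝ ℝ (V2 × V2)).comp
      ((ContinuousLinearMap.snd ℝ ℝ (ℝ × V2 × V2)).comp
        ((ContinuousLinearMap.snd ℝ ℝ (ℝ × ℝ × V2 × V2)).comp
          (ContinuousLinearMap.snd ℝ ℝ (ℝ × ℝ × ℝ × V2 × V2))))) with hpΘdef
  set pQ : Phase →L[ℝ] V2 :=
    (ContinuousLinearMap.fst ℝ V2 V2).comp
      ((ContinuousLinearMap.snd ℝ ℝ (V2 × V2)).comp
        ((ContinuousLinearMap.snd ℝ ℝ (ℝ × V2 × V2)).comp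
          ((ContinuousLinearMap.snd ℝ ℝ (ℝ × ℝ × V2 × V2)).comp
            (ContinuousLinearMap.snd ℝ ℝ (ℝ × ℝ × ℝ × V2 × V2))))) with hpQdef
  set pP : Phase →L[ℝ] V2 :=
    (ContinuousLinearMap.snd ℝ V2 V2).comp
      ((ContinuousLinearMap.snd ℝ ℝ (V2 × V2)).comp
        ((ContinuousLinearMap.snd ℝ ℝ (ℝ × V2 × V2)).comp
          ((ContinuousLinearMap.snd ℝ ℝ (ℝ × ℝ × V2 × V2)).comp
            (ContinuousLinearMap.snd ℝ ℝ (ℝ × ℝ × ℝ × V2 × V2))))) with hpPdef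
  have h1 : HasFDerivAt (fun w : Phase => w.1)
      (ContinuousLinearMap.fst ℝ ℝ (ℝ × ℝ × ℝ × V2 × V2)) z := hasFDerivAt_fst
  have hθ : HasFDerivAt (fun w : Phase => w.2.1) pθ z := pθ.hasFDerivAt
  have h3 : HasFDerivAt (fun w : Phase => w.2.2.1) pR z := pR.hasFDerivAt
  have hΘ : HasFDerivAt (fun w : Phase => w.2.2.2.1) pΘ z := pΘ.hasFDerivAt
  have hQ : ∀ i, HasFDerivAt (fun w : Phase => w.2.2.2.2.1 i)
      ((EuclideanSpace.proj i : V2 →L[ℝ] ℝ).comp pQ) z :=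
    fun i => ((EuclideanSpace.proj i : V2 →L[ℝ] ℝ).comp pQ).hasFDerivAt
  have hP : ∀ i, HasFDerivAt (fun w : Phase => w.2.2.2.2.2 i)
      ((EuclideanSpace.proj i : V2 →L[ℝ] ℝ).comp pP) z :=
    fun i => ((EuclideanSpace.proj i : V2 →L[ℝ] ℝ).comp pP).hasFDerivAt
  have hcos : HasFDerivAt (fun w : Phase => Real.cos w.2.1)
      (-Real.sin z.2.1 • pθ) z := hθ.cos
  have hsin : HasFDerivAt (fun w : Phase => Real.sin w.2.1)
      (Real.cos z.2.1 • pθ) z := hθ.sin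
  have hnsin : HasFDerivAt (fun w : Phase => -Real.sin w.2.1)
      (-(Real.cos z.2.1 • pθ)) z := hsin.neg
  have hncos : HasFDerivAt (fun w : Phase => -Real.cos w.2.1)
      (-(-Real.sin z.2.1 • pθ)) z := hcos.neg
  -- fourth component
  have h4 := hΘ.add (((hQ 0).mul (hP 1)).sub ((hQ 1).mul (hP 0)))
  -- fifth component : rotNeg θ Q
  have hg0Q := (hcos.mul (hQ 0)).add (hsin.mul (hQ 1))
  have hg1Q := (hnsin.mul (hQ 0)).add (hcos.mul (hQ 1))
  have h5' := (hg0Q.smul_const (vec2 1 0)).add (hg1Q.smul_const (vec2 0 1))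
  have heqQ : (fun w : Phase =>
        (Real.cos w.2.1 * w.2.2.2.2.1 0 + Real.sin w.2.1 * w.2.2.2.2.1 1) • vec2 1 0
        + (-Real.sin w.2.1 * w.2.2.2.2.1 0 + Real.cos w.2.1 * w.2.2.2.2.1 1) • vec2 0 1)
      = fun w : Phase => rotNeg w.2.1 w.2.2.2.2.1 := by
    funext w
    rw [vec2_smul, vec2_smul, vec2_add]
    simp [rotNeg]
  simp only [Pi.add_def, Pi.mul_def] at h5'
  rw [heqQ] at h5'
  -- sixth component : rotNeg θ P
  have hg0P := (hcos.mul (hP 0)).add (hsin.mul (hP 1))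
  have hg1P := (hnsin.mul (hP 0)).add (hcos.mul (hP 1))
  have h6' := (hg0P.smul_const (vec2 1 0)).add (hg1P.smul_const (vec2 0 1))
  have heqP : (fun w : Phase =>
        (Real.cos w.2.1 * w.2.2.2.2.2 0 + Real.sin w.2.1 * w.2.2.2.2.2 1) • vec2 1 0
        + (-Real.sin w.2.1 * w.2.2.2.2.2 0 + Real.cos w.2.1 * w.2.2.2.2.2 1) • vec2 0 1)
      = fun w : Phase => rotNeg w.2.1 w.2.2.2.2.2 := by
    funext w
    rw [vec2_smul, vec2_smul, vec2_add]
    simp [rotNeg]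
  simp only [Pi.add_def, Pi.mul_def] at h6'
  rw [heqP] at h6'
  have H := h1.prodMk (hθ.prodMk (h3.prodMk (h4.prodMk (h5'.prodMk h6'))))
  refine H.congr_fderiv ?_
  apply ContinuousLinearMap.ext
  intro u
  simp only [hpθdef, hpRdef, hpΘdef, hpQdef, hpPdef,
    ContinuousLinearMap.prod_apply, ContinuousLinearMap.coe_comp',
    Function.comp_apply, ContinuousLinearMap.coe_fst', ContinuousLinearMap.coe_snd',
    ContinuousLinearMap.add_apply, ContinuousLinearMap.sub_apply,
    ContinuousLinearMap.smul_apply, ContinuousLinearMap.smulRight_apply,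
    ContinuousLinearMap.neg_apply, PiLp.proj_apply, smul_eq_mul,
    LinearMap.coe_toContinuousLinearMap', Dlin, LinearMap.coe_mk, AddHom.coe_mk, cross]
  refine Prod.ext rfl (Prod.ext rfl (Prod.ext rfl (Prod.ext ?_ (Prod.ext ?_ ?_))))
  · ring
  · ext i; fin_cases i <;> · simp [vec2, PiLp.add_apply, PiLp.smul_apply]; ring
  · ext i; fin_cases i <;> · simp [vec2, PiLp.add_apply, PiLp.smul_apply]; ring

/-- `Φ_had` is symplectic: it is differentiable and its Fréchet derivative preserves
the canonical symplectic form at every point. -/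
theorem hadjidemetriou_symplectic :
    Differentiable ℝ PhiHad ∧
    ∀ z u v : Phase, symForm (fderiv ℝ PhiHad z u) (fderiv ℝ PhiHad z v) = symForm u v := by
  refine ⟨fun z => (hasFDerivAt_phiHad z).differentiableAt, fun z u v => ?_⟩
  rw [(hasFDerivAt_phiHad z).fderiv]
  simp only [LinearMap.coe_toContinuousLinearMap', Dlin, LinearMap.coe_mk, AddHom.coe_mk,
    symForm, cross, inner_V2, vec2]
  simp only [PiLp.toLp_apply, Matrix.cons_val_zero, Matrix.cons_val_one, Matrix.head_cons]
  set s := Real.sin z.2.1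
  set c := Real.cos z.2.1
  have hsc : s ^ 2 + c ^ 2 = 1 := sin_sq_add_cos_sq z.2.1
  linear_combination ((u.2.2.2.2.1 0 * v.2.2.2.2.2 0 + u.2.2.2.2.1 1 * v.2.2.2.2.2 1)
      - (u.2.2.2.2.2 0 * v.2.2.2.2.1 0 + u.2.2.2.2.2 1 * v.2.2.2.2.1 1)
      + v.2.1 * ((u.2.2.2.2.1 0 * z.2.2.2.2.2 1 - u.2.2.2.2.1 1 * z.2.2.2.2.2 0)
        + (z.2.2.2.2.1 0 * u.2.2.2.2.2 1 - z.2.2.2.2.1 1 * u.2.2.2.2.2 0))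
      - u.2.1 * ((z.2.2.2.2.1 0 * v.2.2.2.2.2 1 - z.2.2.2.2.1 1 * v.2.2.2.2.2 0)
        + (v.2.2.2.2.1 0 * z.2.2.2.2.2 1 - v.2.2.2.2.1 1 * z.2.2.2.2.2 0))) * hsc
end
end

section
/- Fix μ ∈ (0, 1/2], δ > 0 and α = μ(1−μ). For all r̃, R̃ ∈ ℝ and q₂, v₂ ∈ ℝ² with 1 + √δ r̃ > 0 and all four denominators below nonzero, the once-rescaled Hamiltonian satisfies the exact identity H̃_res^δ(r̃, R̃, q₂, v₂) = [ (1/2)|v₂|² − (1−μ)/|q₂ + (μ,0)| − μ/|q₂ − (1−μ,0)| − q₂×v₂ ] + (1/2)[R̃²/α + α r̃²] + (δ/2)|v₂|² + f̃^δ(r̃, q₂, v₂) + g̃^δ(r̃, q₂), where f̃^δ(r̃, q₂, v₂) = [δ(q₂×v₂)² + (2√δ r̃ + δ r̃²)(2α q₂×v₂ − α² r̃²)] / (2α(1 + √δ r̃)²) and g̃^δ(r̃, q₂) = [(1−μ)/|q₂ + (μ,0)| − (1−μ)/|q₂ + μ(1+√δ r̃)(1,0)|] + [μ/|q₂ − (1−μ,0)|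 − μ/|q₂ − (1−μ)(1+√δ r̃)(1,0)|]. -/
open Real

noncomputable section

/-- The 3BP Hamiltonian in Hadjidemetriou rotating coordinates. -/
def Hrot (μ δ : ℝ) (r R Ω : ℝ) (q2 p2 : V2) : ℝ :=
  ((δ + 1) / (2 * δ)) * ‖p2‖ ^ 2
    - δ * ((1 - μ) / ‖q2 + r • vec2 μ 0‖ + μ / ‖q2 - r • vec2 (1 - μ) 0‖)
    + R ^ 2 / (2 * (μ * (1 - μ)))
    + (Ω - cross q2 p2) ^ 2 / (2 * (μ * (1 - μ)) * r ^ 2)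
    - (μ * (1 - μ)) / r

/-- The once-rescaled Hamiltonian
`H̃_res^δ(r̃, R̃, q₂, v₂) = (1/δ)[H_rot^δ(1 + √δ r̃, √δ R̃, Ω = α, q₂, δv₂) + α/2]`. -/
def Htil (μ δ : ℝ) (rt Rt : ℝ) (q2 v2 : V2) : ℝ :=
  (1 / δ) * (Hrot μ δ (1 + Real.sqrt δ * rt) (Real.sqrt δ * Rt) (μ * (1 - μ)) q2 (δ • v2)
    + μ * (1 - μ) / 2)

/-!
After substituting `r = 1 + √δ r̃`, `R = √δ R̃`, `p₂ = δ v₂` and dividing by `δ`, the kinetic and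
Newtonian terms rescale exactly, with the primaries at `-μ r (1,0)` and `(1-μ) r (1,0)`; comparing
with the unperturbed positions gives `g̃^δ`. The only real computation is the rotator
`(α - δ q₂×v₂)²/(2αr²) - α/r + α/2`: since `r² - 1 = 2√δ r̃ + δ r̃²`, dividing it by `δ` leaves
`-q₂×v₂ + α r̃²/2` plus the remainder `f̃^δ`.
-/

lemma smul_vec2_zero (r a : ℝ) : r • vec2 a 0 = (a * r) • vec2 1 0 := by
  ext i
  fin_cases i <;> simp [vec2, mul_comm]

lemma cross_smul_right (c : ℝ) (q v : V2) : cross q (c • v) = c * cross q v := by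
  simp only [cross, PiLp.smul_apply, smul_eq_mul]
  ring

lemma rotator_div_eq {α δ s rt c : ℝ} (hα : α ≠ 0) (hs0 : s ≠ 0) (hs : s ^ 2 = δ)
    (hr : 1 + s * rt ≠ 0) :
    ((α - δ * c) ^ 2 / (2 * α * (1 + s * rt) ^ 2) - α / (1 + s * rt) + α / 2) / δ
      = -c + α * rt ^ 2 / 2
        + (δ * c ^ 2 + (2 * s * rt + δ * rt ^ 2) * (2 * α * c - α ^ 2 * rt ^ 2))
          / (2 * α * (1 + s * rt) ^ 2) := by
  subst hs
  field_simp
  ring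

lemma Htil_eq_rotator (μ δ rt Rt : ℝ) (q2 v2 : V2) (hδ : 0 < δ) :
    Htil μ δ rt Rt q2 v2 =
      ((δ + 1) / 2) * ‖v2‖ ^ 2
        - ((1 - μ) / ‖q2 + (μ * (1 + Real.sqrt δ * rt)) • vec2 1 0‖
          + μ / ‖q2 - ((1 - μ) * (1 + Real.sqrt δ * rt)) • vec2 1 0‖)
        + Rt ^ 2 / (2 * (μ * (1 - μ)))
        + ((μ * (1 - μ) - δ * cross q2 v2) ^ 2 / (2 * (μ * (1 - μ)) * (1 + Real.sqrt δ * rt) ^ 2)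
          - μ * (1 - μ) / (1 + Real.sqrt δ * rt) + μ * (1 - μ) / 2) / δ := by
  obtain ⟨s, hs, rfl⟩ : ∃ s, 0 < s ∧ δ = s ^ 2 :=
    ⟨√δ, Real.sqrt_pos.2 hδ, (Real.sq_sqrt hδ.le).symm⟩
  rw [Htil, Hrot, cross_smul_right, norm_smul, smul_vec2_zero _ μ, smul_vec2_zero _ (1 - μ),
    Real.sqrt_sq hs.le, Real.norm_eq_abs, mul_pow, sq_abs]
  -- Only `1/δ = 1/s²` has to cancel here; freezing the rotator terms and `α` keeps `field_simp`
  -- from needing `α ≠ 0` and `1 + s * rt ≠ 0`.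
  generalize (μ * (1 - μ) - s ^ 2 * cross q2 v2) ^ 2 / (2 * (μ * (1 - μ)) * (1 + s * rt) ^ 2) = A
  generalize μ * (1 - μ) / (1 + s * rt) = B
  generalize μ * (1 - μ) = α
  field_simp
  ring

theorem Htil_decomposition_general (μ δ : ℝ) (hμ : μ ∈ Set.Ioc (0 : ℝ) (1 / 2)) (hδ : 0 < δ)
    (rt Rt : ℝ) (q2 v2 : V2)
    (hr : 0 < 1 + Real.sqrt δ * rt) :
    let α := μ * (1 - μ)
    Htil μ δ rt Rt q2 v2 =
      ((1 / 2) * ‖v2‖ ^ 2 - (1 - μ) / ‖q2 + vec2 μ 0‖ - μ / ‖q2 - vec2 (1 - μ) 0‖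
          - cross q2 v2)
        + (1 / 2) * (Rt ^ 2 / α + α * rt ^ 2)
        + (δ / 2) * ‖v2‖ ^ 2
        + (δ * (cross q2 v2) ^ 2
            + (2 * Real.sqrt δ * rt + δ * rt ^ 2) * (2 * α * cross q2 v2 - α ^ 2 * rt ^ 2))
          / (2 * α * (1 + Real.sqrt δ * rt) ^ 2)
        + (((1 - μ) / ‖q2 + vec2 μ 0‖
              - (1 - μ) / ‖q2 + (μ * (1 + Real.sqrt δ * rt)) • vec2 1 0‖)
           + (μ / ‖q2 - vec2 (1 - μ) 0‖
              - μ / ‖q2 - ((1 - μ) * (1 + Real.sqrt δ * rt)) • vec2 1 0‖)) := by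
  dsimp only
  have hα : μ * (1 - μ) ≠ 0 := mul_ne_zero hμ.1.ne' (by linarith [hμ.2])
  rw [Htil_eq_rotator μ δ rt Rt q2 v2 hδ, rotator_div_eq hα (Real.sqrt_pos.2 hδ).ne' (Real.sq_sqrt hδ.le) hr.ne']
  -- otherwise `ring` expands `α` inside the inverses and cannot match `(2 * α)⁻¹` with `α⁻¹ / 2`
  generalize μ * (1 - μ) = α
  ring

/-- Exact decomposition of the once-rescaled Hamiltonian into the RPC3BP part, the
rotator, and the remainder `(δ/2)|v₂|² + f̃^δ + g̃^δ`. -/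
theorem Htil_decomposition (μ δ : ℝ) (hμ : μ ∈ Set.Ioc (0 : ℝ) (1 / 2)) (hδ : 0 < δ)
    (rt Rt : ℝ) (q2 v2 : V2)
    (hr : 0 < 1 + Real.sqrt δ * rt)
    (h1 : q2 + vec2 μ 0 ≠ 0)
    (h2 : q2 - vec2 (1 - μ) 0 ≠ 0)
    (h3 : q2 + (μ * (1 + Real.sqrt δ * rt)) • vec2 1 0 ≠ 0)
    (h4 : q2 - ((1 - μ) * (1 + Real.sqrt δ * rt)) • vec2 1 0 ≠ 0) :
    let α := μ * (1 - μ)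
    Htil μ δ rt Rt q2 v2 =
      ((1 / 2) * ‖v2‖ ^ 2 - (1 - μ) / ‖q2 + vec2 μ 0‖ - μ / ‖q2 - vec2 (1 - μ) 0‖
          - cross q2 v2)
        + (1 / 2) * (Rt ^ 2 / α + α * rt ^ 2)
        + (δ / 2) * ‖v2‖ ^ 2
        + (δ * (cross q2 v2) ^ 2
            + (2 * Real.sqrt δ * rt + δ * rt ^ 2) * (2 * α * cross q2 v2 - α ^ 2 * rt ^ 2))
          / (2 * α * (1 + Real.sqrt δ * rt) ^ 2)
        + (((1 - μ) / ‖q2 + vec2 μ 0‖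
              - (1 - μ) / ‖q2 + (μ * (1 + Real.sqrt δ * rt)) • vec2 1 0‖)
           + (μ / ‖q2 - vec2 (1 - μ) 0‖
              - μ / ‖q2 - ((1 - μ) * (1 + Real.sqrt δ * rt)) • vec2 1 0‖)) :=
  Htil_decomposition_general μ δ hμ hδ rt Rt q2 v2 hr
end
end

section
/- Fix μ ∈ (0, 1/2], δ > 0, ε > 0 and α = μ(1−μ). For all r̂, R̂ ∈ ℝ and q̂₂, v̂₂ ∈ ℝ² with 1 + √(δ/ε) r̂ > 0 and all relevant denominators nonzero, the exact identity holds: ε · H̃_res^δ(r̂/√ε, R̂/√ε, q̂₂/ε², ε v̂₂) = −q̂₂×v̂₂ + ε³[ (1/2)|v̂₂|² − (1−μ)/|q̂₂ + με²(1,0)| − μ/|q̂₂ − (1−μ)ε²(1,0)| ] + (1/2)[R̂²/α + α r̂²] + (δε³/2)|v̂₂|² + f̂(r̂, q̂₂, v̂₂) + ĝ(r̂, q̂₂), where f̂(r̂, q̂₂, v̂₂) = [ (δ/ε)(q̂₂×v̂₂)² + (2√(δ/ε) r̂ + (δ/ε) r̂²)(2α q̂₂×v̂₂ − α² r̂²)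 ] / (2α(1 + √(δ/ε) r̂)²) and ĝ(r̂, q̂₂) = ε³[(1−μ)/|q̂₂ + με²(1,0)| − (1−μ)/|q̂₂ + με²(1 + √(δ/ε) r̂)(1,0)|] + ε³[μ/|q̂₂ − (1−μ)ε²(1,0)| − μ/|q̂₂ − (1−μ)ε²(1 + √(δ/ε) r̂)(1,0)|]. -/
open Real

noncomputable section

/-! With `s = √(δ/ε)`, so that `δ = s² ε`, the rescaled arguments become `1 + s r̂` and `s R̂`,
each distance to a primary is `ε⁻²` times the corresponding distance in the hatted variables,
and the angular momentum `q₂ × p₂` becomes `s² (q̂₂ × v̂₂)`. The identity is then a rational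
identity in `s`, `r̂`, `R̂`, `q̂₂ × v̂₂`, `|v̂₂|` and the four distances; its rotator part rests on
`(1 + s r̂)² - 1 = 2 s r̂ + s² r̂²`. -/

lemma cross_smul_smul (a b : ℝ) (x y : V2) : cross (a • x) (b • y) = a * b * cross x y := by
  simp only [cross, PiLp.smul_apply, smul_eq_mul]
  ring

lemma vec2_eq_smul (a : ℝ) : vec2 a 0 = a • vec2 1 0 := by
  ext i
  fin_cases i <;> simp [vec2]

section

variable {E : Type*} [NormedAddCommGroup E] [NormedSpace ℝ E] {c : ℝ}

lemma norm_inv_smul_add_smul (hc : 0 < c) (q w : E) (r : ℝ) :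
    ‖c⁻¹ • q + r • w‖ = c⁻¹ * ‖q + (c * r) • w‖ := by
  rw [← norm_smul_of_nonneg (inv_nonneg.mpr hc.le), smul_add, smul_smul, inv_mul_cancel_left₀ hc.ne']

lemma norm_inv_smul_sub_smul (hc : 0 < c) (q w : E) (r : ℝ) :
    ‖c⁻¹ • q - r • w‖ = c⁻¹ * ‖q - (c * r) • w‖ := by
  rw [← norm_smul_of_nonneg (inv_nonneg.mpr hc.le), smul_sub, smul_smul, inv_mul_cancel_left₀ hc.ne']

end

lemma Real.sqrt_mul_div_sqrt {x : ℝ} (hx : 0 ≤ x) (y z : ℝ) : √x * (z / √y) = √(x / y) * z := by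
  rw [Real.sqrt_div hx]
  ring

theorem Htil_second_rescaling_general (μ δ ε : ℝ) (hμ : μ ∈ Set.Ioc (0 : ℝ) (1 / 2))
    (hδ : 0 < δ) (hε : 0 < ε) (rh Rh : ℝ) (qh vh : V2)
    (hr : 0 < 1 + Real.sqrt (δ / ε) * rh) :
    let α := μ * (1 - μ)
    ε * Htil μ δ (rh / Real.sqrt ε) (Rh / Real.sqrt ε) ((ε ^ 2)⁻¹ • qh) (ε • vh) =
      -cross qh vh
        + ε ^ 3 * ((1 / 2) * ‖vh‖ ^ 2
            - (1 - μ) / ‖qh + (μ * ε ^ 2) • vec2 1 0‖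
            - μ / ‖qh - ((1 - μ) * ε ^ 2) • vec2 1 0‖)
        + (1 / 2) * (Rh ^ 2 / α + α * rh ^ 2)
        + (δ * ε ^ 3 / 2) * ‖vh‖ ^ 2
        + ((δ / ε) * (cross qh vh) ^ 2
            + (2 * Real.sqrt (δ / ε) * rh + (δ / ε) * rh ^ 2)
              * (2 * α * cross qh vh - α ^ 2 * rh ^ 2))
          / (2 * α * (1 + Real.sqrt (δ / ε) * rh) ^ 2)
        + (ε ^ 3 * ((1 - μ) / ‖qh + (μ * ε ^ 2) • vec2 1 0‖
              - (1 - μ) / ‖qh + (μ * ε ^ 2 * (1 + Real.sqrt (δ / ε) * rh)) • vec2 1 0‖)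
           + ε ^ 3 * (μ / ‖qh - ((1 - μ) * ε ^ 2) • vec2 1 0‖
              - μ / ‖qh - ((1 - μ) * ε ^ 2 * (1 + Real.sqrt (δ / ε) * rh)) • vec2 1 0‖)) := by
  dsimp only
  have hμ0 : μ ≠ 0 := hμ.1.ne'
  have hμ1 : 1 - μ ≠ 0 := by linarith [hμ.2]
  have hε2 : 0 < ε ^ 2 := by positivity
  set s := √(δ / ε) with hs
  have hs0 : s ≠ 0 := (Real.sqrt_pos.mpr (div_pos hδ hε)).ne'
  have hr0 : 1 + s * rh ≠ 0 := hr.ne'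
  have hδ_eq : δ = s ^ 2 * ε := by
    rw [hs, Real.sq_sqrt (div_nonneg hδ.le hε.le)]
    field_simp
  rw [Htil, Hrot, Real.sqrt_mul_div_sqrt hδ.le, Real.sqrt_mul_div_sqrt hδ.le, ← hs,
    vec2_eq_smul μ, vec2_eq_smul (1 - μ), norm_inv_smul_add_smul hε2,
    norm_inv_smul_sub_smul hε2, smul_smul, smul_smul, smul_smul, cross_smul_smul,
    norm_smul, Real.norm_of_nonneg (by positivity : 0 ≤ δ * ε)]
  rw [hδ_eq]
  field_simp
  ring

/-- Exact decomposition of the twice-rescaled Hamiltonian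
`ε·H̃_res^δ(r̂/√ε, R̂/√ε, q̂₂/ε², εv̂₂)` into the leading part, the rotator, and the
remainder `(δε³/2)|v̂₂|² + f̂ + ĝ`. -/
theorem Htil_second_rescaling (μ δ ε : ℝ) (hμ : μ ∈ Set.Ioc (0 : ℝ) (1 / 2))
    (hδ : 0 < δ) (hε : 0 < ε) (rh Rh : ℝ) (qh vh : V2)
    (hr : 0 < 1 + Real.sqrt (δ / ε) * rh)
    (h1 : qh + (μ * ε ^ 2) • vec2 1 0 ≠ 0)
    (h2 : qh - ((1 - μ) * ε ^ 2) • vec2 1 0 ≠ 0)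
    (h3 : qh + (μ * ε ^ 2 * (1 + Real.sqrt (δ / ε) * rh)) • vec2 1 0 ≠ 0)
    (h4 : qh - ((1 - μ) * ε ^ 2 * (1 + Real.sqrt (δ / ε) * rh)) • vec2 1 0 ≠ 0) :
    let α := μ * (1 - μ)
    ε * Htil μ δ (rh / Real.sqrt ε) (Rh / Real.sqrt ε) ((ε ^ 2)⁻¹ • qh) (ε • vh) =
      -cross qh vh
        + ε ^ 3 * ((1 / 2) * ‖vh‖ ^ 2
            - (1 - μ) / ‖qh + (μ * ε ^ 2) • vec2 1 0‖
            - μ / ‖qh - ((1 - μ) * ε ^ 2) • vec2 1 0‖)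
        + (1 / 2) * (Rh ^ 2 / α + α * rh ^ 2)
        + (δ * ε ^ 3 / 2) * ‖vh‖ ^ 2
        + ((δ / ε) * (cross qh vh) ^ 2
            + (2 * Real.sqrt (δ / ε) * rh + (δ / ε) * rh ^ 2)
              * (2 * α * cross qh vh - α ^ 2 * rh ^ 2))
          / (2 * α * (1 + Real.sqrt (δ / ε) * rh) ^ 2)
        + (ε ^ 3 * ((1 - μ) / ‖qh + (μ * ε ^ 2) • vec2 1 0‖
              - (1 - μ) / ‖qh + (μ * ε ^ 2 * (1 + Real.sqrt (δ / ε) * rh)) • vec2 1 0‖)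
           + ε ^ 3 * (μ / ‖qh - ((1 - μ) * ε ^ 2) • vec2 1 0‖
              - μ / ‖qh - ((1 - μ) * ε ^ 2 * (1 + Real.sqrt (δ / ε) * rh)) • vec2 1 0‖)) :=
  Htil_second_rescaling_general μ δ ε hμ hδ hε rh Rh qh vh hr
end
end

section
/- Fix μ ∈ (0, 1/2] and C > 1. There exist M > 0 and δ₁ > 0 such that for all δ ∈ (0, δ₁] and all (r̃, R̃, q₂, v₂) with |r̃| ≤ C, |R̃| ≤ C, |q₂| ≤ C, |v₂| ≤ C, |q₂ + (μ,0)| ≥ 1/C and |q₂ − (1−μ,0)| ≥ 1/C, the remainder ΔH̃_res^δ(r̃, q₂, v₂) := H̃_res^δ(r̃, R̃, q₂, v₂) − [ (1/2)|v₂|² − (1−μ)/|q₂ + (μ,0)| − μ/|q₂ − (1−μ,0)| − q₂×v₂ ] − (1/2)[R̃²/α + α r̃²] satisfies |ΔH̃_res^δ(r̃, q₂, v₂)| ≤ M√δ. -/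
open Real

noncomputable section

lemma coord_abs_le_norm (x : V2) (i : Fin 2) : |x i| ≤ ‖x‖ := by
  rw [EuclideanSpace.norm_eq]
  rw [show |x i| = Real.sqrt (|x i|^2) by rw [Real.sqrt_sq_eq_abs, abs_abs]]
  apply Real.sqrt_le_sqrt
  rw [Fin.sum_univ_two]
  fin_cases i <;> simp [sq_abs] <;> positivity

lemma norm_vec2 (a : ℝ) (ha : 0 ≤ a) : ‖vec2 a 0‖ = a := by
  rw [EuclideanSpace.norm_eq, Fin.sum_univ_two]
  simp [vec2, Real.sqrt_sq_eq_abs, abs_of_nonneg ha]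

lemma cross_smul_right_s13 (t : ℝ) (a b : V2) : cross a (t • b) = t * cross a b := by
  simp [cross, PiLp.smul_apply, smul_eq_mul]; ring

lemma smul_diff1 (s rt μ : ℝ) (q2 : V2) :
    (q2 + ((1:ℝ)+s*rt) • vec2 μ 0) - (q2 + vec2 μ 0) = (s*rt) • vec2 μ 0 := by
  module

lemma smul_diff2 (s rt μ : ℝ) (q2 : V2) :
    (q2 - ((1:ℝ)+s*rt) • vec2 (1-μ) 0) - (q2 - vec2 (1-μ) 0) = (-(s*rt)) • vec2 (1-μ) 0 := by
  module

lemma key_id (s α Rt rt n c A A' B B' μ : ℝ) (hs : s ≠ 0) (hα : α ≠ 0)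
    (hr : (1+s*rt) ≠ 0) (hA : A ≠ 0) (hA' : A' ≠ 0) (hB : B ≠ 0) (hB' : B' ≠ 0) :
    (1/s^2) * (((s^2+1)/(2*s^2))*(s^2*n)^2 - s^2*((1-μ)/A' + μ/B') + (s*Rt)^2/(2*α)
        + (α - s^2*c)^2/(2*α*(1+s*rt)^2) - α/(1+s*rt) + α/2)
      - ((1/2*n^2 - (1-μ)/A - μ/B - c) + 1/2*(Rt^2/α + α*rt^2))
    = s^2/2*n^2 + (1-μ)*(1/A - 1/A') + μ*(1/B - 1/B')
      + (1 - 1/(1+s*rt)^2)*(c - α*rt^2/2) + s^2*c^2/(2*α*(1+s*rt)^2) := by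
  field_simp
  ring

set_option maxHeartbeats 2000000 in
lemma tail_bound (μ C s rt n c A A' B B' : ℝ)
    (hC : 1 < C) (hμ0 : 0 < μ) (hμ2 : μ ≤ 1/2)
    (hs0 : 0 < s) (hs1 : s ≤ 1/2)
    (hrt : |rt| ≤ C) (h_srt_half : |s*rt| ≤ 1/2) (hr_lb : (1:ℝ)/2 ≤ 1 + s*rt)
    (hn0 : 0 ≤ n) (hv2 : n ≤ C) (hc : |c| ≤ 2*C^2)
    (hA : 1/C ≤ A) (hB : 1/C ≤ B)
    (hA'lb : 1/(2*C) ≤ A') (hB'lb : 1/(2*C) ≤ B')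
    (hnumA : |A' - A| ≤ s*C) (hnumB : |B' - B| ≤ s*C) :
    |s^2/2*n^2 + (1-μ)*(1/A - 1/A') + μ*(1/B - 1/B')
        + (1 - 1/(1+s*rt)^2)*(c - (μ*(1-μ))*rt^2/2)
        + s^2*c^2/(2*(μ*(1-μ))*(1+s*rt)^2)|
      ≤ (C^2/2 + 2*C^3 + 2*C^3 + 30*C^3 + 8*C^4/(μ*(1-μ))) * s := by
  have hα : (0:ℝ) < μ * (1 - μ) := by nlinarith
  have hC0 : (0:ℝ) < C := by linarith
  have hiC : (0:ℝ) < 1/C := by positivity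
  have hi2C : (0:ℝ) < 1/(2*C) := by positivity
  have hA0 : (0:ℝ) < A := lt_of_lt_of_le hiC hA
  have hB0 : (0:ℝ) < B := lt_of_lt_of_le hiC hB
  have hA'0 : (0:ℝ) < A' := lt_of_lt_of_le hi2C hA'lb
  have hB'0 : (0:ℝ) < B' := lt_of_lt_of_le hi2C hB'lb
  -- now bound each of the five terms
  have habs_sub : ∀ a b : ℝ, |a - b| ≤ |a| + |b| := fun a b => by
    rw [sub_eq_add_neg]
    exact (abs_add_le a (-b)).trans (by rw [abs_neg])
  have hT1 : |s^2/2*n^2| ≤ C^2/2 * s := by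
    rw [abs_of_nonneg (by positivity)]
    have h1 : n^2 ≤ C^2 := by nlinarith
    have h2 : s^2 ≤ s := by nlinarith
    nlinarith [mul_le_mul h2 h1 (by positivity) hs0.le]
  have hnumA : |A' - A| ≤ s*C := by
    have h1 : s * |rt| * μ ≤ s*C := by
      have hrμ : |rt| * μ ≤ C := by nlinarith [abs_nonneg rt]
      nlinarith [mul_le_mul_of_nonneg_left hrμ hs0.le]
    linarith
  have hnumB : |B' - B| ≤ s*C := by
    have h1 : s * |rt| * (1 - μ) ≤ s*C := by
      have hrμ : |rt| * (1 - μ) ≤ C := by nlinarith [abs_nonneg rt]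
      nlinarith [mul_le_mul_of_nonneg_left hrμ hs0.le]
    linarith
  have hT2 : |(1-μ)*(1/A - 1/A')| ≤ 2*C^3*s := by
    have hsplit : 1/A - 1/A' = (A' - A) / (A * A') := by
      field_simp
    rw [abs_mul, hsplit, abs_div, abs_of_pos (mul_pos hA0 hA'0),
      abs_of_pos (show (0:ℝ) < 1 - μ by linarith)]
    have hden : (1/C)*(1/(2*C)) ≤ A * A' := mul_le_mul hA hA'lb hi2C.le hA0.le
    have hq : |A' - A| / (A * A') ≤ (s*C) / ((1/C)*(1/(2*C))) :=
      div_le_div₀ (by positivity) hnumA (by positivity) hden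
    have heq : (s*C) / ((1/C)*(1/(2*C))) = 2*C^3*s := by field_simp
    rw [heq] at hq
    nlinarith [abs_nonneg (A' - A),
      div_nonneg (abs_nonneg (A' - A)) (mul_pos hA0 hA'0).le]
  have hT3 : |μ*(1/B - 1/B')| ≤ 2*C^3*s := by
    have hsplit : 1/B - 1/B' = (B' - B) / (B * B') := by
      field_simp
    rw [abs_mul, hsplit, abs_div, abs_of_pos (mul_pos hB0 hB'0), abs_of_pos hμ0]
    have hden : (1/C)*(1/(2*C)) ≤ B * B' := mul_le_mul hB hB'lb hi2C.le hB0.le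
    have hq : |B' - B| / (B * B') ≤ (s*C) / ((1/C)*(1/(2*C))) :=
      div_le_div₀ (by positivity) hnumB (by positivity) hden
    have heq : (s*C) / ((1/C)*(1/(2*C))) = 2*C^3*s := by field_simp
    rw [heq] at hq
    nlinarith [abs_nonneg (B' - B),
      div_nonneg (abs_nonneg (B' - B)) (mul_pos hB0 hB'0).le]
  have hT4 : |(1 - 1/(1+s*rt)^2)*(c - (μ*(1-μ))*rt^2/2)| ≤ 30*C^3*s := by
    have hfac1 : |1 - 1/(1+s*rt)^2| ≤ 10*C*s := by
      have hsplit4 : (1:ℝ) - 1/(1+s*rt)^2 = (s*rt*(2+s*rt))/(1+s*rt)^2 := by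
        field_simp; ring
      rw [hsplit4, abs_div, abs_mul, abs_of_pos (show (0:ℝ) < (1+s*rt)^2 by positivity)]
      have habs2 : |2 + s*rt| ≤ 5/2 := by
        rw [abs_le]
        constructor <;> nlinarith [(abs_le.1 h_srt_half).1, (abs_le.1 h_srt_half).2]
      have hden4 : (1/4:ℝ) ≤ (1+s*rt)^2 := by nlinarith
      have hsrtC : |s*rt| ≤ s*C := by
        rw [abs_mul, abs_of_pos hs0]
        nlinarith [mul_le_mul_of_nonneg_left hrt hs0.le]
      have hnum4 : |s * rt| * |2 + s * rt| ≤ s*C*(5/2) := by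
        nlinarith [mul_le_mul hsrtC habs2 (abs_nonneg _) (by positivity : (0:ℝ) ≤ s*C)]
      have hq := div_le_div₀ (by positivity : (0:ℝ) ≤ s*C*(5/2)) hnum4
        (by norm_num : (0:ℝ) < 1/4) hden4
      have heq : (s*C*(5/2)) / (1/4:ℝ) = 10*C*s := by ring
      linarith [heq ▸ hq]
    have hfac2 : |c - (μ*(1-μ))*rt^2/2| ≤ 3*C^2 := by
      have hμα : μ*(1-μ) ≤ 1/4 := by nlinarith [sq_nonneg (μ - 1/2)]
      have hrt2 : rt^2 ≤ C^2 := by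
        nlinarith [sq_abs rt, mul_le_mul hrt hrt (abs_nonneg rt) (by linarith : (0:ℝ) ≤ C)]
      have h1 : |(μ*(1-μ))*rt^2/2| ≤ C^2 := by
        rw [abs_of_nonneg (by positivity)]
        nlinarith [mul_le_mul hμα hrt2 (sq_nonneg rt) (by norm_num : (0:ℝ) ≤ 1/4)]
      have := habs_sub c ((μ*(1-μ))*rt^2/2)
      nlinarith
    rw [abs_mul]
    nlinarith [mul_le_mul hfac1 hfac2 (abs_nonneg _) (by positivity : (0:ℝ) ≤ 10*C*s)]
  have hT5 : |s^2*c^2/(2*(μ*(1-μ))*(1+s*rt)^2)| ≤ 8*C^4/(μ*(1-μ))*s := by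
    rw [abs_of_nonneg (div_nonneg (by positivity)
      (mul_nonneg (by nlinarith) (sq_nonneg _)))]
    have hc2 : c^2 ≤ 4*C^4 := by nlinarith [sq_abs c, abs_nonneg c]
    have hnum : s^2*c^2 ≤ s*(4*C^4) := by
      have h2 : s^2 ≤ s := by nlinarith
      nlinarith [mul_le_mul h2 hc2 (sq_nonneg _) hs0.le]
    have hden : (μ*(1-μ))/2 ≤ 2*(μ*(1-μ))*(1+s*rt)^2 := by
      have hr2 : (1/4:ℝ) ≤ (1+s*rt)^2 := by nlinarith
      nlinarith [mul_le_mul_of_nonneg_left hr2 hα.le]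
    have hq := div_le_div₀ (by positivity : (0:ℝ) ≤ s*(4*C^4)) hnum
      (by positivity : (0:ℝ) < (μ*(1-μ))/2) hden
    have heq : (s*(4*C^4)) / ((μ*(1-μ))/2) = 8*C^4/(μ*(1-μ))*s := by
      field_simp; ring
    linarith [heq ▸ hq]
  -- combine
  have hsum0 := abs_add_le (s^2/2*n^2) ((1-μ)*(1/A - 1/A'))
  have hsum1 := abs_add_le (s^2/2*n^2 + (1-μ)*(1/A - 1/A')) (μ*(1/B - 1/B'))
  have hsum2 := abs_add_le (s^2/2*n^2 + (1-μ)*(1/A - 1/A') + μ*(1/B - 1/B'))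
    ((1 - 1/(1+s*rt)^2)*(c - (μ*(1-μ))*rt^2/2))
  have hsum3 := abs_add_le (s^2/2*n^2 + (1-μ)*(1/A - 1/A') + μ*(1/B - 1/B')
      + (1 - 1/(1+s*rt)^2)*(c - (μ*(1-μ))*rt^2/2))
    (s^2*c^2/(2*(μ*(1-μ))*(1+s*rt)^2))
  have hMs : (C^2/2 + 2*C^3 + 2*C^3 + 30*C^3 + 8*C^4/(μ*(1-μ))) * s
      = C^2/2*s + 2*C^3*s + 2*C^3*s + 30*C^3*s + 8*C^4/(μ*(1-μ))*s := by ring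
  linarith

set_option maxHeartbeats 2000000 in
/-- On a compact region away from collisions, the once-rescaled Hamiltonian is an
`O(√δ)` perturbation of the direct sum of the RPC3BP and a rotator. -/
theorem Htil_remainder_bound (μ : ℝ) (hμ : μ ∈ Set.Ioc (0 : ℝ) (1 / 2))
    (C : ℝ) (hC : 1 < C) :
    ∃ M > (0 : ℝ), ∃ δ₁ > (0 : ℝ), ∀ δ ∈ Set.Ioc (0 : ℝ) δ₁,
      ∀ (rt Rt : ℝ) (q2 v2 : V2),
        |rt| ≤ C → |Rt| ≤ C → ‖q2‖ ≤ C → ‖v2‖ ≤ C →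
        1 / C ≤ ‖q2 + vec2 μ 0‖ → 1 / C ≤ ‖q2 - vec2 (1 - μ) 0‖ →
        |Htil μ δ rt Rt q2 v2 -
            (((1 / 2) * ‖v2‖ ^ 2 - (1 - μ) / ‖q2 + vec2 μ 0‖
                - μ / ‖q2 - vec2 (1 - μ) 0‖ - cross q2 v2)
              + (1 / 2) * (Rt ^ 2 / (μ * (1 - μ)) + (μ * (1 - μ)) * rt ^ 2))|
          ≤ M * Real.sqrt δ := by
  obtain ⟨hμ0, hμ2⟩ := hμ
  have hα : (0:ℝ) < μ * (1 - μ) := by nlinarith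
  have hC0 : (0:ℝ) < C := by linarith
  have hC0' : C ≠ 0 := hC0.ne'
  refine ⟨C^2/2 + 2*C^3 + 2*C^3 + 30*C^3 + 8*C^4/(μ*(1-μ)), ?_, 1/(4*C^4), by positivity, ?_⟩
  · have h1 : (0:ℝ) < 8*C^4/(μ*(1-μ)) := by positivity
    nlinarith
  intro δ hδ rt Rt q2 v2 hrt hRt hq2 hv2 hA hB
  obtain ⟨hδ0, hδ1⟩ := hδ
  set s := Real.sqrt δ with hs
  have hs0 : 0 < s := Real.sqrt_pos.2 hδ0
  have hδs : s^2 = δ := Real.sq_sqrt hδ0.le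
  have hsC : s ≤ 1/(2*C^2) := by
    have h := Real.sqrt_le_sqrt hδ1
    rwa [show (1/(4*C^4):ℝ) = (1/(2*C^2))^2 by ring,
      Real.sqrt_sq (by positivity)] at h
  have hs1 : s ≤ 1/2 := by
    have : (1:ℝ)/(2*C^2) ≤ 1/2 := by
      rw [div_le_div_iff₀ (by positivity) (by norm_num)]; nlinarith
    linarith
  -- bound on s * |rt|
  have h_srt : s * |rt| ≤ 1/(2*C) := by
    have h1 : s * |rt| ≤ (1/(2*C^2)) * C :=
      mul_le_mul hsC hrt (abs_nonneg _) (by positivity)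
    have h2 : (1/(2*C^2)) * C = 1/(2*C) := by field_simp
    linarith
  have h_srt_half : |s * rt| ≤ 1/2 := by
    rw [abs_mul, abs_of_pos hs0]
    have : (1:ℝ)/(2*C) ≤ 1/2 := by
      rw [div_le_div_iff₀ (by positivity) (by norm_num)]; nlinarith
    linarith
  have hr_lb : (1:ℝ)/2 ≤ 1 + s*rt := by
    have := (abs_le.1 h_srt_half).1; linarith
  have hr0 : (0:ℝ) < 1 + s*rt := by linarith
  clear_value s
  have hiC : (0:ℝ) < 1/C := by positivity
  have hA0 : (0:ℝ) < ‖q2 + vec2 μ 0‖ := lt_of_lt_of_le hiC hA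
  have hB0 : (0:ℝ) < ‖q2 - vec2 (1-μ) 0‖ := lt_of_lt_of_le hiC hB
  -- differences of norms
  have hdiffA : |‖q2 + ((1:ℝ)+s*rt) • vec2 μ 0‖ - ‖q2 + vec2 μ 0‖| ≤ s * |rt| * μ := by
    calc |‖q2 + ((1:ℝ)+s*rt) • vec2 μ 0‖ - ‖q2 + vec2 μ 0‖|
        ≤ ‖(q2 + ((1:ℝ)+s*rt) • vec2 μ 0) - (q2 + vec2 μ 0)‖ := abs_norm_sub_norm_le _ _
      _ = ‖(s*rt) • vec2 μ 0‖ := by rw [smul_diff1]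
      _ = s * |rt| * μ := by
          rw [norm_smul, Real.norm_eq_abs, norm_vec2 μ hμ0.le, abs_mul, abs_of_pos hs0]
  have hdiffB : |‖q2 - ((1:ℝ)+s*rt) • vec2 (1-μ) 0‖ - ‖q2 - vec2 (1-μ) 0‖| ≤ s * |rt| * (1 - μ) := by
    calc |‖q2 - ((1:ℝ)+s*rt) • vec2 (1-μ) 0‖ - ‖q2 - vec2 (1-μ) 0‖|
        ≤ ‖(q2 - ((1:ℝ)+s*rt) • vec2 (1-μ) 0) - (q2 - vec2 (1-μ) 0)‖ :=
          abs_norm_sub_norm_le _ _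
      _ = ‖(-(s*rt)) • vec2 (1-μ) 0‖ := by rw [smul_diff2]
      _ = s * |rt| * (1 - μ) := by
          rw [norm_smul, Real.norm_eq_abs, norm_vec2 (1-μ) (by linarith),
            abs_neg, abs_mul, abs_of_pos hs0]
  -- lower bounds on the perturbed norms
  have hsrtμ : s * |rt| * μ ≤ 1/(4*C) := by
    have h3 : s * |rt| * μ ≤ (1/(2*C))*(1/2) :=
      mul_le_mul h_srt hμ2 hμ0.le (by positivity)
    have h4 : (1/(2*C))*(1/2:ℝ) = 1/(4*C) := by field_simp; ring
    linarith
  have hsrtμ' : s * |rt| * (1 - μ) ≤ 1/(2*C) := by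
    have h3 : s * |rt| * (1 - μ) ≤ (1/(2*C))*1 :=
      mul_le_mul h_srt (by linarith) (by linarith) (by positivity)
    linarith
  have e1 : 1/(4*C) + 1/(2*C) ≤ 1/C := by
    rw [show (1/(4*C) + 1/(2*C) : ℝ) = (3/4)*(1/C) by field_simp; ring]
    nlinarith
  have e2 : 1/(2*C) + 1/(2*C) ≤ 1/C := by
    have : (1/(2*C) + 1/(2*C) : ℝ) = 1/C := by field_simp; norm_num
    linarith
  have hA'lb : 1/(2*C) ≤ ‖q2 + ((1:ℝ)+s*rt) • vec2 μ 0‖ := by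
    have h5 := (abs_le.1 hdiffA).1
    linarith
  have hB'lb : 1/(2*C) ≤ ‖q2 - ((1:ℝ)+s*rt) • vec2 (1-μ) 0‖ := by
    have h5 := (abs_le.1 hdiffB).1
    linarith
  have hi2C : (0:ℝ) < 1/(2*C) := by positivity
  have hA'0 : (0:ℝ) < ‖q2 + ((1:ℝ)+s*rt) • vec2 μ 0‖ := lt_of_lt_of_le hi2C hA'lb
  have hB'0 : (0:ℝ) < ‖q2 - ((1:ℝ)+s*rt) • vec2 (1-μ) 0‖ := lt_of_lt_of_le hi2C hB'lb
  -- cross product bound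
  have hc : |cross q2 v2| ≤ 2*C^2 := by
    have h1 := coord_abs_le_norm q2 0
    have h2 := coord_abs_le_norm q2 1
    have h3 := coord_abs_le_norm v2 0
    have h4 := coord_abs_le_norm v2 1
    have habs : |cross q2 v2| ≤ |q2 0| * |v2 1| + |q2 1| * |v2 0| := by
      rw [cross, ← abs_mul, ← abs_mul]
      exact (abs_sub _ _)
    nlinarith [abs_nonneg (q2 0), abs_nonneg (q2 1), abs_nonneg (v2 0), abs_nonneg (v2 1),
      norm_nonneg q2, norm_nonneg v2]
  have hnumA : |‖q2 + ((1:ℝ)+s*rt) • vec2 μ 0‖ - ‖q2 + vec2 μ 0‖| ≤ s*C := by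
    have h1 : s * |rt| * μ ≤ s*C := by
      have hrμ : |rt| * μ ≤ C := by nlinarith [abs_nonneg rt]
      nlinarith [mul_le_mul_of_nonneg_left hrμ hs0.le]
    linarith
  have hnumB : |‖q2 - ((1:ℝ)+s*rt) • vec2 (1-μ) 0‖ - ‖q2 - vec2 (1-μ) 0‖| ≤ s*C := by
    have h1 : s * |rt| * (1 - μ) ≤ s*C := by
      have hrμ : |rt| * (1 - μ) ≤ C := by nlinarith [abs_nonneg rt]
      nlinarith [mul_le_mul_of_nonneg_left hrμ hs0.le]
    linarith
  -- the algebraic identity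
  have hEq : Htil μ δ rt Rt q2 v2 -
      (((1 / 2) * ‖v2‖ ^ 2 - (1 - μ) / ‖q2 + vec2 μ 0‖
          - μ / ‖q2 - vec2 (1 - μ) 0‖ - cross q2 v2)
        + (1 / 2) * (Rt ^ 2 / (μ * (1 - μ)) + (μ * (1 - μ)) * rt ^ 2))
      = s^2/2*‖v2‖^2
        + (1-μ)*(1/‖q2 + vec2 μ 0‖ - 1/‖q2 + ((1:ℝ)+s*rt) • vec2 μ 0‖)
        + μ*(1/‖q2 - vec2 (1-μ) 0‖ - 1/‖q2 - ((1:ℝ)+s*rt) • vec2 (1-μ) 0‖)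
        + (1 - 1/(1+s*rt)^2)*(cross q2 v2 - (μ*(1-μ))*rt^2/2)
        + s^2*(cross q2 v2)^2/(2*(μ*(1-μ))*(1+s*rt)^2) := by
    simp only [Htil, Hrot]
    rw [← hs, ← hδs, norm_smul, Real.norm_eq_abs, abs_of_nonneg (sq_nonneg s),
      cross_smul_right_s13]
    exact key_id s (μ*(1-μ)) Rt rt ‖v2‖ (cross q2 v2) ‖q2 + vec2 μ 0‖
      ‖q2 + ((1:ℝ)+s*rt) • vec2 μ 0‖ ‖q2 - vec2 (1-μ) 0‖
      ‖q2 - ((1:ℝ)+s*rt) • vec2 (1-μ) 0‖ μ hs0.ne' hα.ne' hr0.ne'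
      hA0.ne' hA'0.ne' hB0.ne' hB'0.ne'
  rw [hEq]
  exact tail_bound μ C s rt ‖v2‖ (cross q2 v2) ‖q2 + vec2 μ 0‖
    ‖q2 + ((1:ℝ)+s*rt) • vec2 μ 0‖ ‖q2 - vec2 (1-μ) 0‖
    ‖q2 - ((1:ℝ)+s*rt) • vec2 (1-μ) 0‖
    hC hμ0 hμ2 hs0 hs1 hrt h_srt_half hr_lb (norm_nonneg v2) hv2 hc hA hB
    hA'lb hB'lb hnumA hnumB

end
end
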